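/- arXiv:2501.04611 — 2 statements merged into one kernel-verified Lean document; each statement's English description precedes it below -/
import Mathlib

section
/- Let 0 < s₂ < 1. Then for all n, the infinite product ∏_{k=n+1}^∞ (1 - s₂^k) ≥ exp(- s₂^{n+1} / ((1 - s₂^n)(1 - s₂))). -/
open Real

theorem neg_log_one_sub_le_div_one_sub {x c : ℝ} (hx : 0 ≤ x) (hxc : x ≤ c) (hc : c < 1) :
    -log (1 - x) ≤ x / (1 - c) := by
  have hx1 : 0 < 1 - x := by linarith
  calc -log (1 - x) ≤ (1 - x)⁻¹ - 1 := by linarith [one_sub_inv_le_log_of_pos hx1]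
    _ = x / (1 - x) := by field_simp; ring
    _ ≤ x / (1 - c) := div_le_div_of_nonneg_left hx (by linarith) (by linarith)

theorem exp_neg_tsum_div_le_tprod_one_sub {ι : Type*} {a : ι → ℝ} {c : ℝ}
    (ha : Summable a) (ha0 : ∀ i, 0 ≤ a i) (hac : ∀ i, a i ≤ c) (hc : c < 1) :
    exp (-(∑' i, a i) / (1 - c)) ≤ ∏' i, (1 - a i) := by
  have hpos : ∀ i, 0 < 1 - a i := fun i ↦ by linarith [hac i]
  have hlog : Summable fun i ↦ log (1 - a i) := by
    simpa [sub_eq_add_neg] using summable_log_one_add_of_summable ha.neg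
  rw [← rexp_tsum_eq_tprod hpos hlog, exp_le_exp, neg_div, ← tsum_div_const, ← tsum_neg]
  refine (ha.div_const _).neg.tsum_le_tsum (fun i ↦ ?_) hlog
  linarith [neg_log_one_sub_le_div_one_sub (ha0 i) (hac i) hc]

theorem tprod_one_sub_pow_ge (s₂ : ℝ) (h0 : 0 < s₂) (h1 : s₂ < 1) (n : ℕ) (hn : 1 ≤ n) :
    (∏' k : ℕ, (1 - s₂ ^ (n + 1 + k))) ≥
      Real.exp (-(s₂ ^ (n + 1) / ((1 - s₂ ^ n) * (1 - s₂)))) := by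
  have hgeom : HasSum (fun k ↦ s₂ ^ (n + 1 + k)) (s₂ ^ (n + 1) / (1 - s₂)) := by
    simpa [pow_add, div_eq_mul_inv] using
      (hasSum_geometric_of_lt_one h0.le h1).mul_left (s₂ ^ (n + 1))
  have hbound := exp_neg_tsum_div_le_tprod_one_sub (c := s₂ ^ n) hgeom.summable
    (fun k ↦ by positivity) (fun k ↦ pow_le_pow_of_le_one h0.le h1.le (by omega))
    (pow_lt_one₀ h0.le h1 (by omega))
  rwa [hgeom.tsum_eq, neg_div, div_div, mul_comm (1 - s₂)] at hbound
end

section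
/- Let A, B be n×n positive definite Hermitian matrices with A ⪰ B (A − B positive semidefinite), and let A/A₁ and B/B₁ denote the Schur complements of their respective top-left k×k blocks A₁, B₁. Then det(A/A₁) ≥ det(B/B₁). -/
open scoped ComplexOrder

/-!
For `B > 0`, the quadratic form of `B / B₁₁` at `y` is the minimum over `x` of the quadratic form
of `B` at `(x, y)`; evaluating at the minimiser for `A` gives `B / B₁₁ ⪯ A / A₁₁`. The determinant
is monotone on positive semidefinite matrices: if `0 < B ⪯ A` and `B = Xᴴ X`, then
`1 ⪯ X⁻ᴴ A X⁻¹`, whose eigenvalues are all at least `1`.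
-/

open scoped MatrixOrder

namespace Matrix

section Determinant

variable {n 𝕜 : Type*} [Fintype n] [DecidableEq n] [RCLike 𝕜]

theorem one_le_det {M : Matrix n n 𝕜} (hM : 1 ≤ M) : 1 ≤ M.det := by
  have hH : M.IsHermitian := by simpa using (isHermitian_one (n := n) (α := 𝕜)).add hM.1
  have hspec := (CFC.one_le_iff (R := ℝ) M hH.isSelfAdjoint).mp hM
  rw [hH.det_eq_prod_eigenvalues, ← RCLike.ofReal_prod, ← RCLike.ofReal_one,
    RCLike.ofReal_le_ofReal]
  exact Finset.one_le_prod fun i _ => hspec _ (hH.eigenvalues_mem_spectrum_real i)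

theorem PosDef.det_le_det {A B : Matrix n n 𝕜} (hB : B.PosDef) (hBA : B ≤ A) :
    B.det ≤ A.det := by
  obtain ⟨X, rfl⟩ := CStarAlgebra.nonneg_iff_eq_star_mul_self.mp hB.posSemidef.nonneg
  have hX : IsUnit X.det := by
    have hdetB := hB.det_pos.ne'
    rw [det_mul] at hdetB
    exact (right_ne_zero_of_mul hdetB).isUnit
  set Y := X⁻¹
  have hXY : X * Y = 1 := mul_nonsing_inv X hX
  have hYX : Y * X = 1 := nonsing_inv_mul X hX
  have hM : 1 ≤ star Y * A * Y :=
    calc (1 : Matrix n n 𝕜) = star Y * (star X * X) * Y := by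
          rw [mul_assoc, mul_assoc, hXY, mul_one, ← star_mul, hXY, star_one]
      _ ≤ star Y * A * Y := star_left_conjugate_le_conjugate hBA Y
  calc (star X * X).det ≤ (star X * X).det * (star Y * A * Y).det :=
        le_mul_of_one_le_right hB.det_pos.le (one_le_det hM)
    _ = A.det := by
        have hstar : (star X).det * (star Y).det = 1 := by
          rw [← det_mul, ← star_mul, hYX, star_one, det_one]
        have hdet : X.det * Y.det = 1 := by rw [← det_mul, hXY, det_one]
        simp only [det_mul]
        linear_combination (A.det * X.det * Y.det) * hstar + A.det * hdet

theorem PosSemidef.det_le_det {A B : Matrix n n 𝕜} (hB : B.PosSemidef) (hBA : B ≤ A) :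
    B.det ≤ A.det := by
  by_cases hB' : B.PosDef
  · exact hB'.det_le_det hBA
  · rw [hB.posDef_iff_det_ne_zero, not_not] at hB'
    rw [hB']
    exact (nonneg_iff_posSemidef.mp (hB.nonneg.trans hBA)).det_nonneg

end Determinant

noncomputable def schurComplement₁₁ {m n α : Type*} [Fintype m] [DecidableEq m] [CommRing α]
    (M : Matrix (m ⊕ n) (m ⊕ n) α) : Matrix n n α :=
  M.toBlocks₂₂ - M.toBlocks₂₁ * M.toBlocks₁₁⁻¹ * M.toBlocks₁₂

section SchurComplement

variable {m n 𝕜 : Type*} [RCLike 𝕜] {M : Matrix (m ⊕ n) (m ⊕ n) 𝕜}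

theorem IsHermitian.toBlocks₁₁ (hM : M.IsHermitian) : M.toBlocks₁₁.IsHermitian :=
  hM.submatrix Sum.inl

theorem IsHermitian.toBlocks₂₁_eq (hM : M.IsHermitian) : M.toBlocks₂₁ = M.toBlocks₁₂ᴴ := by
  conv_lhs => rw [← hM]
  rfl

theorem IsHermitian.fromBlocks_toBlocks_eq (hM : M.IsHermitian) :
    Matrix.fromBlocks M.toBlocks₁₁ M.toBlocks₁₂ M.toBlocks₁₂ᴴ M.toBlocks₂₂ = M := by
  rw [← hM.toBlocks₂₁_eq, fromBlocks_toBlocks]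

theorem PosDef.toBlocks₁₁ [Fintype m] [Fintype n] (hM : M.PosDef) : M.toBlocks₁₁.PosDef :=
  hM.submatrix Sum.inl_injective

variable [Fintype m] [DecidableEq m]

theorem IsHermitian.schurComplement₁₁_eq (hM : M.IsHermitian) :
    M.schurComplement₁₁ = M.toBlocks₂₂ - M.toBlocks₁₂ᴴ * M.toBlocks₁₁⁻¹ * M.toBlocks₁₂ := by
  rw [schurComplement₁₁, hM.toBlocks₂₁_eq]

variable [Fintype n]

theorem PosDef.posSemidef_schurComplement₁₁ (hM : M.PosDef) :
    M.schurComplement₁₁.PosSemidef := by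
  have := hM.toBlocks₁₁.isUnit.invertible
  rw [hM.1.schurComplement₁₁_eq]
  exact (PosDef.fromBlocks₁₁ _ _ hM.toBlocks₁₁).mp (hM.1.fromBlocks_toBlocks_eq ▸ hM.posSemidef)

theorem IsHermitian.dotProduct_mulVec_sumElim (hM : M.IsHermitian) [Invertible M.toBlocks₁₁]
    (x : m → 𝕜) (y : n → 𝕜) :
    star (x ⊕ᵥ y) ⬝ᵥ (M *ᵥ (x ⊕ᵥ y)) =
      star (x + (M.toBlocks₁₁⁻¹ * M.toBlocks₁₂) *ᵥ y) ⬝ᵥ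
          (M.toBlocks₁₁ *ᵥ (x + (M.toBlocks₁₁⁻¹ * M.toBlocks₁₂) *ᵥ y)) +
        star y ⬝ᵥ (M.schurComplement₁₁ *ᵥ y) := by
  have h := schur_complement_eq₁₁ M.toBlocks₁₂ M.toBlocks₂₂ x y hM.toBlocks₁₁
  rw [hM.fromBlocks_toBlocks_eq] at h
  rw [dotProduct_mulVec, dotProduct_mulVec, dotProduct_mulVec, hM.schurComplement₁₁_eq]
  exact h

theorem PosDef.dotProduct_schurComplement₁₁_le (hM : M.PosDef) (x : m → 𝕜) (y : n → 𝕜) :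
    star y ⬝ᵥ (M.schurComplement₁₁ *ᵥ y) ≤ star (x ⊕ᵥ y) ⬝ᵥ (M *ᵥ (x ⊕ᵥ y)) := by
  have := hM.toBlocks₁₁.isUnit.invertible
  rw [hM.1.dotProduct_mulVec_sumElim]
  exact le_add_of_nonneg_left (hM.toBlocks₁₁.posSemidef.dotProduct_mulVec_nonneg _)

theorem IsHermitian.dotProduct_schurComplement₁₁_eq (hM : M.IsHermitian)
    [Invertible M.toBlocks₁₁] (y : n → 𝕜) :
    star y ⬝ᵥ (M.schurComplement₁₁ *ᵥ y) =
      star (-((M.toBlocks₁₁⁻¹ * M.toBlocks₁₂) *ᵥ y) ⊕ᵥ y) ⬝ᵥ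
        (M *ᵥ (-((M.toBlocks₁₁⁻¹ * M.toBlocks₁₂) *ᵥ y) ⊕ᵥ y)) := by
  rw [hM.dotProduct_mulVec_sumElim, neg_add_cancel, mulVec_zero, dotProduct_zero, zero_add]

theorem PosDef.schurComplement₁₁_mono {A B : Matrix (m ⊕ n) (m ⊕ n) 𝕜} (hB : B.PosDef)
    (hBA : B ≤ A) : B.schurComplement₁₁ ≤ A.schurComplement₁₁ := by
  have hA : A.PosDef := by simpa using hB.add_posSemidef hBA
  have := hA.toBlocks₁₁.isUnit.invertible
  refine .of_dotProduct_mulVec_nonneg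
    (hA.posSemidef_schurComplement₁₁.1.sub hB.posSemidef_schurComplement₁₁.1) fun y => ?_
  set v := -((A.toBlocks₁₁⁻¹ * A.toBlocks₁₂) *ᵥ y) ⊕ᵥ y
  have hquad : star y ⬝ᵥ (B.schurComplement₁₁ *ᵥ y) ≤ star y ⬝ᵥ (A.schurComplement₁₁ *ᵥ y) :=
    calc star y ⬝ᵥ (B.schurComplement₁₁ *ᵥ y) ≤ star v ⬝ᵥ (B *ᵥ v) :=
          hB.dotProduct_schurComplement₁₁_le _ y
      _ ≤ star v ⬝ᵥ (A *ᵥ v) := by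
          have := hBA.dotProduct_mulVec_nonneg v
          rwa [sub_mulVec, dotProduct_sub, sub_nonneg] at this
      _ = star y ⬝ᵥ (A.schurComplement₁₁ *ᵥ y) := (hA.1.dotProduct_schurComplement₁₁_eq y).symm
  rwa [sub_mulVec, dotProduct_sub, sub_nonneg]

end SchurComplement

end Matrix

theorem det_schur_complement_mono_general {k l : ℕ}
    (A B : Matrix (Fin k ⊕ Fin l) (Fin k ⊕ Fin l) ℂ)
    (hB : B.PosDef) (hAB : (A - B).PosSemidef) :
    (B.toBlocks₂₂ - B.toBlocks₂₁ * B.toBlocks₁₁⁻¹ * B.toBlocks₁₂).det ≤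
      (A.toBlocks₂₂ - A.toBlocks₂₁ * A.toBlocks₁₁⁻¹ * A.toBlocks₁₂).det :=
  hB.posSemidef_schurComplement₁₁.det_le_det (hB.schurComplement₁₁_mono hAB)

/-- Monotonicity of the determinant of the Schur complement in the Loewner order. -/
theorem det_schur_complement_mono {k l : ℕ}
    (A B : Matrix (Fin k ⊕ Fin l) (Fin k ⊕ Fin l) ℂ)
    (hA : A.PosDef) (hB : B.PosDef) (hAB : (A - B).PosSemidef) :
    (B.toBlocks₂₂ - B.toBlocks₂₁ * B.toBlocks₁₁⁻¹ * B.toBlocks₁₂).det ≤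
      (A.toBlocks₂₂ - A.toBlocks₂₁ * A.toBlocks₁₁⁻¹ * A.toBlocks₁₂).det :=
  det_schur_complement_mono_general A B hB hAB
end
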